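/- Let n ≥ 3 be a natural number and let H be the presented group with generators xᵢ for i ∈ Iₙ = {1} ∪ {3, 4, …, 2n+2} and relations: xᵢ² = e for all i; the braid relation xᵢ·xⱼ·xᵢ = xⱼ·xᵢ·xⱼ for every pair {i,j} in Eₙ (the pairs within each triangle Tₖ = {2k−1, 2k+1, 2k+2}, k = 1, …, n−1, with T₁ = {1,3,4}, together with {4, 2n+1} and {2n−1, 2n+2}); the commutation relation xᵢ·xⱼ = xⱼ·xᵢ for every other pair of distinct indices; and [x₁, x₄·x₃·x₄] = e and [x_{2k+2}, x_{2k−1}·x_{2k+1}·x_{2k−1}] = e for k = 2, …, n−1. Define transpositions in the symmetric group on Fin (2n+2): t₁ = swap 0 1, t₃ = swap 0 2, t₄ = swap 0 3, t_{2k+1} = swap (2k−2) (2k) and t_{2k+2} = swap (2k−2) (2k+1) for k = 2, …, n−1, t_{2n+1} = swap 3 (2n), and t_{2n+2} = swap (2n−2) (2n+1). Then the assignment xᵢ ↦ tᵢ respects all the defining relations of H, so it extends to a group homomorphism from H to Equiv.Perm (Fin (2n+2)), and this homomorphism is surjective. -/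
import Mathlib


/- The surjection step in the proof of Theorem 3.4 of the paper: the assignment
sending each generator `xᵢ` of the presented group `G₁` (for the degenerated
surface `R_{n+1} ∪ R_{n+1}`) to the indicated transposition of `S_{2n+2}`
respects all the defining relations, hence extends to a group homomorphism
`G₁ → S_{2n+2}`, and this homomorphism is surjective. -/

namespace Stmt11

/-- The index set `Iₙ = {1} ∪ {3, 4, …, 2n+2}` of the generators. -/
def Idx (n : ℕ) : Type := {i : ℕ // i = 1 ∨ (3 ≤ i ∧ i ≤ 2 * n + 2)}

/-- The unordered pair `{i,j}` belongs to `Eₙ`: it is one of the three pairs of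
a triangle `Tₖ = {2k−1, 2k+1, 2k+2}` for some `1 ≤ k ≤ n−1`, or one of the two
extra pairs `{4, 2n+1}` and `{2n−1, 2n+2}`. -/
def inE (n i j : ℕ) : Prop :=
  (∃ k, 1 ≤ k ∧ k ≤ n - 1 ∧
    (({i, j} : Finset ℕ) = {2 * k - 1, 2 * k + 1} ∨
     ({i, j} : Finset ℕ) = {2 * k - 1, 2 * k + 2} ∨
     ({i, j} : Finset ℕ) = {2 * k + 1, 2 * k + 2})) ∨
  ({i, j} : Finset ℕ) = {4, 2 * n + 1} ∨
  ({i, j} : Finset ℕ) = {2 * n - 1, 2 * n + 2}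

/-- Relator for the braid relation `⟨u,v⟩ = e`, i.e. `u·v·u = v·u·v`. -/
def braidR {α : Type*} (u v : FreeGroup α) : FreeGroup α := u * v * u * (v * u * v)⁻¹

/-- Relator for the commutation relation `[u,v] = e`, i.e. `u·v = v·u`. -/
def commR {α : Type*} (u v : FreeGroup α) : FreeGroup α := u * v * u⁻¹ * v⁻¹

/-- The defining relators: (i) squares; (ii) braid relations for the pairs in
`Eₙ`; (iii) commutation relations for the remaining pairs of distinct indices;
(iv) `[x₁, x₄·x₃·x₄] = e` and `[x_{2k+2}, x_{2k−1}·x_{2k+1}·x_{2k−1}] = e` for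
`k = 2, …, n−1`. -/
def rels (n : ℕ) : Set (FreeGroup (Idx n)) :=
  {w | ∃ i : Idx n, w = FreeGroup.of i ^ 2} ∪
  {w | ∃ i j : Idx n, inE n i.1 j.1 ∧
        w = braidR (FreeGroup.of i) (FreeGroup.of j)} ∪
  {w | ∃ i j : Idx n, i.1 ≠ j.1 ∧ ¬ inE n i.1 j.1 ∧
        w = commR (FreeGroup.of i) (FreeGroup.of j)} ∪
  {w | ∃ a b c : Idx n, a.1 = 1 ∧ b.1 = 3 ∧ c.1 = 4 ∧
        w = commR (FreeGroup.of a) (FreeGroup.of c * FreeGroup.of b * FreeGroup.of c)} ∪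
  {w | ∃ k, 2 ≤ k ∧ k ≤ n - 1 ∧ ∃ a b c : Idx n,
        a.1 = 2 * k + 2 ∧ b.1 = 2 * k - 1 ∧ c.1 = 2 * k + 1 ∧
        w = commR (FreeGroup.of a) (FreeGroup.of b * FreeGroup.of c * FreeGroup.of b)}

/-- The element of `Fin (2n+2)` with value `a` (for `a < 2n+2`). -/
def fmk (n a : ℕ) : Fin (2 * n + 2) := ⟨a % (2 * n + 2), Nat.mod_lt _ (by omega)⟩

/-- The assignment of transpositions to the generators:
`x₁ ↦ swap 0 1`, `x₃ ↦ swap 0 2`, `x₄ ↦ swap 0 3`,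
`x_{2k+1} ↦ swap (2k−2) (2k)` and `x_{2k+2} ↦ swap (2k−2) (2k+1)` for
`k = 2, …, n−1`, `x_{2n+1} ↦ swap 3 (2n)`, `x_{2n+2} ↦ swap (2n−2) (2n+1)`.
(For `i = 2k+1` one has `2k−2 = i−3` and `2k = i−1`; for `i = 2k+2` one has
`2k−2 = i−4` and `2k+1 = i−1`; the cases `i = 3, 4` also fit these formulas.) -/
def toPerm (n : ℕ) (i : Idx n) : Equiv.Perm (Fin (2 * n + 2)) :=
  if i.1 = 1 then Equiv.swap (fmk n 0) (fmk n 1)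
  else if i.1 = 2 * n + 1 then Equiv.swap (fmk n 3) (fmk n (2 * n))
  else if i.1 = 2 * n + 2 then Equiv.swap (fmk n (2 * n - 2)) (fmk n (2 * n + 1))
  else if i.1 % 2 = 1 then Equiv.swap (fmk n (i.1 - 3)) (fmk n (i.1 - 1))
  else Equiv.swap (fmk n (i.1 - 4)) (fmk n (i.1 - 1))

end Stmt11
namespace Stmt11

open Equiv

variable {α : Type*} [DecidableEq α]

/-- First point of the transposition assigned to index `i`. -/
def pa (n i : ℕ) : ℕ :=
  if i = 1 then 0 else if i = 2 * n + 1 then 3 else if i = 2 * n + 2 then 2 * n - 2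
  else if i % 2 = 1 then i - 3 else i - 4

/-- Second point of the transposition assigned to index `i`. -/
def pb (n i : ℕ) : ℕ :=
  if i = 1 then 1 else if i = 2 * n + 1 then 2 * n else if i = 2 * n + 2 then 2 * n + 1
  else i - 1

lemma toPerm_eq (n : ℕ) (i : Idx n) :
    toPerm n i = Equiv.swap (fmk n (pa n i.1)) (fmk n (pb n i.1)) := by
  unfold toPerm pa pb
  split_ifs <;> rfl

lemma fmk_inj {n a b : ℕ} (ha : a ≤ 2 * n + 1) (hb : b ≤ 2 * n + 1) :
    fmk n a = fmk n b ↔ a = b := by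
  unfold fmk
  rw [Fin.mk.injEq, Nat.mod_eq_of_lt (by omega), Nat.mod_eq_of_lt (by omega)]

lemma fmk_ne {n a b : ℕ} (ha : a ≤ 2 * n + 1) (hb : b ≤ 2 * n + 1) (h : a ≠ b) :
    fmk n a ≠ fmk n b := fun hc => h ((fmk_inj ha hb).mp hc)

lemma pa_lt_pb {n i : ℕ} (hn : 3 ≤ n) (hi : i = 1 ∨ (3 ≤ i ∧ i ≤ 2 * n + 2)) :
    pa n i < pb n i := by
  unfold pa pb; split_ifs <;> first | contradiction | omega

lemma pb_le {n i : ℕ} (hn : 3 ≤ n) (hi : i = 1 ∨ (3 ≤ i ∧ i ≤ 2 * n + 2)) :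
    pb n i ≤ 2 * n + 1 := by
  unfold pb; split_ifs <;> first | contradiction | omega

lemma pa_le {n i : ℕ} (hn : 3 ≤ n) (hi : i = 1 ∨ (3 ≤ i ∧ i ≤ 2 * n + 2)) :
    pa n i ≤ 2 * n + 1 :=
  le_of_lt (lt_of_lt_of_le (pa_lt_pb hn hi) (pb_le hn hi))

lemma pair_eq {a b c d : ℕ} :
    ({a, b} : Finset ℕ) = {c, d} ↔ (a = c ∧ b = d) ∨ (a = d ∧ b = c) := by
  constructor
  · intro h
    have h1 : a ∈ ({c, d} : Finset ℕ) := by rw [← h]; simp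
    have h2 : b ∈ ({c, d} : Finset ℕ) := by rw [← h]; simp
    have h3 : c ∈ ({a, b} : Finset ℕ) := by rw [h]; simp
    have h4 : d ∈ ({a, b} : Finset ℕ) := by rw [h]; simp
    simp only [Finset.mem_insert, Finset.mem_singleton] at h1 h2 h3 h4
    omega
  · rintro (⟨rfl, rfl⟩ | ⟨rfl, rfl⟩)
    · rfl
    · exact Finset.pair_comm a b

lemma inE_symm {n i j : ℕ} (h : inE n i j) : inE n j i := by
  unfold inE at *
  rwa [Finset.pair_comm j i]

lemma pav_aux {n i : ℕ} (hn : 3 ≤ n)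
    (h1 : i ≠ 1) (h2 : i ≠ 2 * n + 1) (h3 : i ≠ 2 * n + 2) :
    (i % 2 = 1 → pa n i = i - 3) ∧ (i % 2 ≠ 1 → pa n i = i - 4) ∧ pb n i = i - 1 := by
  unfold pa pb
  split_ifs <;> first | contradiction | simp_all

/-- Full case description of the values of `pa` and `pb` on a valid index. -/
lemma pav {n i : ℕ} (hn : 3 ≤ n) (hi : i = 1 ∨ (3 ≤ i ∧ i ≤ 2 * n + 2)) :
    (i = 1 ∧ pa n i = 0 ∧ pb n i = 1) ∨
    (i % 2 = 1 ∧ 3 ≤ i ∧ i ≤ 2 * n - 1 ∧ pa n i = i - 3 ∧ pb n i = i - 1) ∨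
    (i % 2 = 0 ∧ 4 ≤ i ∧ i ≤ 2 * n ∧ pa n i = i - 4 ∧ pb n i = i - 1) ∨
    (i = 2 * n + 1 ∧ pa n i = 3 ∧ pb n i = 2 * n) ∨
    (i = 2 * n + 2 ∧ pa n i = 2 * n - 2 ∧ pb n i = 2 * n + 1) := by
  rcases hi with rfl | ⟨hl, hr⟩
  · exact Or.inl ⟨rfl, by unfold pa; simp, by unfold pb; simp⟩
  · by_cases e1 : i = 2 * n + 1
    · subst e1
      refine Or.inr (Or.inr (Or.inr (Or.inl ⟨rfl, ?_, ?_⟩)))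
      · unfold pa; split_ifs <;> first | contradiction | omega
      · unfold pb; split_ifs <;> first | contradiction | omega
    · by_cases e2 : i = 2 * n + 2
      · subst e2
        refine Or.inr (Or.inr (Or.inr (Or.inr ⟨rfl, ?_, ?_⟩)))
        · unfold pa; split_ifs <;> first | contradiction | omega
        · unfold pb; split_ifs <;> first | contradiction | omega
      · obtain ⟨v1, v2, v3⟩ := pav_aux hn (by omega) e1 e2
        by_cases hpar : i % 2 = 1
        · exact Or.inr (Or.inl ⟨hpar, hl, by omega, v1 hpar, v3⟩)
        · exact Or.inr (Or.inr (Or.inl ⟨by omega, by omega, by omega, v2 hpar, v3⟩))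

set_option maxHeartbeats 4000000 in
lemma shared_of_inE {n i j : ℕ} (hn : 3 ≤ n)
    (hi : i = 1 ∨ (3 ≤ i ∧ i ≤ 2 * n + 2)) (hj : j = 1 ∨ (3 ≤ j ∧ j ≤ 2 * n + 2))
    (h : inE n i j) :
    pa n i = pa n j ∨ pa n i = pb n j ∨ pb n i = pa n j ∨ pb n i = pb n j := by
  have h1 := pav hn hi
  have h2 := pav hn hj
  obtain (⟨k, hk1, hk2, (hp | hp | hp)⟩ | hp | hp) := h <;> rw [pair_eq] at hp <;> omega

lemma inE_of_arith {n i j : ℕ} (hn : 3 ≤ n)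
    (h : (j = i + 2 ∧ i % 2 = 1 ∧ i + 2 ≤ 2 * n - 1) ∨
         (j = i + 3 ∧ i % 2 = 1 ∧ i + 3 ≤ 2 * n) ∨
         (j = i + 1 ∧ i % 2 = 1 ∧ 3 ≤ i ∧ i + 1 ≤ 2 * n) ∨
         (i = 4 ∧ j = 2 * n + 1) ∨ (i = 2 * n - 1 ∧ j = 2 * n + 2)) :
    inE n i j := by
  rcases h with ⟨hj, ho, hb⟩ | ⟨hj, ho, hb⟩ | ⟨hj, ho, hi3, hb⟩ | ⟨hi, hj⟩ | ⟨hi, hj⟩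
  · exact Or.inl ⟨(i + 1) / 2, by omega, by omega, Or.inl (by
      rw [show 2 * ((i + 1) / 2) - 1 = i by omega, show 2 * ((i + 1) / 2) + 1 = j by omega])⟩
  · exact Or.inl ⟨(i + 1) / 2, by omega, by omega, Or.inr (Or.inl (by
      rw [show 2 * ((i + 1) / 2) - 1 = i by omega, show 2 * ((i + 1) / 2) + 2 = j by omega]))⟩
  · exact Or.inl ⟨(i - 1) / 2, by omega, by omega, Or.inr (Or.inr (by
      rw [show 2 * ((i - 1) / 2) + 1 = i by omega, show 2 * ((i - 1) / 2) + 2 = j by omega]))⟩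
  · exact Or.inr (Or.inl (by rw [hi, hj]))
  · exact Or.inr (Or.inr (by rw [hi, hj]))

set_option maxHeartbeats 4000000 in
lemma inE_of_shared_lt {n i j : ℕ} (hn : 3 ≤ n)
    (hi : i = 1 ∨ (3 ≤ i ∧ i ≤ 2 * n + 2)) (hj : j = 1 ∨ (3 ≤ j ∧ j ≤ 2 * n + 2))
    (hlt : i < j)
    (hsh : pa n i = pa n j ∨ pa n i = pb n j ∨ pb n i = pa n j ∨ pb n i = pb n j) :
    inE n i j := by
  apply inE_of_arith hn
  have h1 := pav hn hi
  have h2 := pav hn hj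
  rcases h1 with h1 | h1 | h1 | h1 | h1 <;> rcases h2 with h2 | h2 | h2 | h2 | h2 <;> omega

lemma inE_of_shared {n i j : ℕ} (hn : 3 ≤ n)
    (hi : i = 1 ∨ (3 ≤ i ∧ i ≤ 2 * n + 2)) (hj : j = 1 ∨ (3 ≤ j ∧ j ≤ 2 * n + 2))
    (hne : i ≠ j)
    (hsh : pa n i = pa n j ∨ pa n i = pb n j ∨ pb n i = pa n j ∨ pb n i = pb n j) :
    inE n i j := by
  rcases Nat.lt_or_ge i j with hlt | hge
  · exact inE_of_shared_lt hn hi hj hlt hsh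
  · exact inE_symm (inE_of_shared_lt hn hj hi (by omega) (by tauto))

/-- `swap u v * swap u w * swap u v = swap v w` for distinct `u,v,w`. -/
lemma swap_conj_core {u v w : α} (huv : u ≠ v) (huw : u ≠ w) (hvw : v ≠ w) :
    Equiv.swap u v * Equiv.swap u w * Equiv.swap u v = Equiv.swap v w := by
  nth_rewrite 3 [← Equiv.swap_inv]
  rw [← Equiv.swap_apply_apply, Equiv.swap_apply_left,
    Equiv.swap_apply_of_ne_of_ne huw.symm hvw.symm]

lemma braid_core {u v w : α} (huv : u ≠ v) (huw : u ≠ w) (hvw : v ≠ w) :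
    Equiv.swap u v * Equiv.swap u w * Equiv.swap u v =
      Equiv.swap u w * Equiv.swap u v * Equiv.swap u w := by
  rw [swap_conj_core huv huw hvw, swap_conj_core huw huv (Ne.symm hvw), Equiv.swap_comm]

lemma braid_swap {a b c d : α} (hab : a ≠ b) (hcd : c ≠ d)
    (h : a = c ∨ a = d ∨ b = c ∨ b = d) :
    Equiv.swap a b * Equiv.swap c d * Equiv.swap a b =
      Equiv.swap c d * Equiv.swap a b * Equiv.swap c d := by
  rcases h with rfl | rfl | rfl | rfl
  · by_cases hbd : b = d
    · subst hbd; rfl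
    · exact braid_core hab hcd hbd
  · rw [Equiv.swap_comm c a]
    by_cases hbc : b = c
    · subst hbc; rfl
    · exact braid_core hab (Ne.symm hcd) hbc
  · rw [Equiv.swap_comm a b]
    by_cases had : a = d
    · subst had; rfl
    · exact braid_core (Ne.symm hab) hcd had
  · rw [Equiv.swap_comm a b, Equiv.swap_comm c b]
    by_cases hac : a = c
    · subst hac; rfl
    · exact braid_core (Ne.symm hab) (Ne.symm hcd) hac

lemma swap_commute {a b c d : α} (h1 : c ≠ a) (h2 : c ≠ b) (h3 : d ≠ a) (h4 : d ≠ b) :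
    Equiv.swap a b * Equiv.swap c d = Equiv.swap c d * Equiv.swap a b := by
  have h : Equiv.swap a b * Equiv.swap c d * (Equiv.swap a b)⁻¹ = Equiv.swap c d := by
    rw [← Equiv.swap_apply_apply, Equiv.swap_apply_of_ne_of_ne h1 h2,
      Equiv.swap_apply_of_ne_of_ne h3 h4]
  exact mul_inv_eq_iff_eq_mul.mp h

lemma swap_step {S : Subgroup (Equiv.Perm α)} {a b c : α} (hab : a ≠ b) (hac : a ≠ c)
    (h1 : Equiv.swap a b ∈ S) (h2 : Equiv.swap b c ∈ S) : Equiv.swap a c ∈ S := by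
  have h3 : Equiv.swap b c * Equiv.swap a b * (Equiv.swap b c)⁻¹ ∈ S :=
    mul_mem (mul_mem h2 h1) (inv_mem h2)
  rwa [← Equiv.swap_apply_apply, Equiv.swap_apply_of_ne_of_ne hab hac,
    Equiv.swap_apply_left] at h3

end Stmt11
open Stmt11 Equiv in
/-- The assignment `xᵢ ↦ tᵢ` kills every relator of `G₁`, hence induces a group
homomorphism `G₁ → S_{2n+2}`, and this homomorphism is surjective. -/
theorem stmt11 (n : ℕ) (hn : 3 ≤ n) :
    ∃ h : ∀ r ∈ Stmt11.rels n, FreeGroup.lift (Stmt11.toPerm n) r = 1,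
      Function.Surjective (PresentedGroup.toGroup h) := by
  classical
  have hmain : ∀ r ∈ Stmt11.rels n, FreeGroup.lift (Stmt11.toPerm n) r = 1 := by
    intro r hr
    simp only [Stmt11.rels, Set.mem_union, Set.mem_setOf_eq] at hr
    rcases hr with ((((⟨i, rfl⟩ | ⟨i, j, hE, rfl⟩) | ⟨i, j, hne, hnE, rfl⟩) |
      ⟨a, b, c, ha, hb, hc, rfl⟩) | ⟨k, hk1, hk2, a, b, c, ha, hb, hc, rfl⟩)
    · rw [map_pow, FreeGroup.lift_apply_of, toPerm_eq, sq, Equiv.swap_mul_self]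
    · -- braid relations
      simp only [braidR, map_mul, map_inv, FreeGroup.lift_apply_of]
      rw [mul_inv_eq_one, toPerm_eq, toPerm_eq]
      apply braid_swap
      · exact fmk_ne (pa_le hn i.2) (pb_le hn i.2) (Nat.ne_of_lt (pa_lt_pb hn i.2))
      · exact fmk_ne (pa_le hn j.2) (pb_le hn j.2) (Nat.ne_of_lt (pa_lt_pb hn j.2))
      · rcases shared_of_inE hn i.2 j.2 hE with h | h | h | h
        · exact Or.inl (congrArg _ h)
        · exact Or.inr (Or.inl (congrArg _ h))
        · exact Or.inr (Or.inr (Or.inl (congrArg _ h)))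
        · exact Or.inr (Or.inr (Or.inr (congrArg _ h)))
    · -- commuting pairs
      simp only [commR, map_mul, map_inv, FreeGroup.lift_apply_of]
      rw [toPerm_eq, toPerm_eq]
      have hdisj : ¬(pa n i.1 = pa n j.1 ∨ pa n i.1 = pb n j.1 ∨
          pb n i.1 = pa n j.1 ∨ pb n i.1 = pb n j.1) :=
        fun hsh => hnE (inE_of_shared hn i.2 j.2 hne hsh)
      push_neg at hdisj
      obtain ⟨d1, d2, d3, d4⟩ := hdisj
      rw [swap_commute
        (fmk_ne (pa_le hn j.2) (pa_le hn i.2) (Ne.symm d1))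
        (fmk_ne (pa_le hn j.2) (pb_le hn i.2) (Ne.symm d3))
        (fmk_ne (pb_le hn j.2) (pa_le hn i.2) (Ne.symm d2))
        (fmk_ne (pb_le hn j.2) (pb_le hn i.2) (Ne.symm d4))]
      group
    · -- [x₁, x₄ x₃ x₄] = 1
      simp only [commR, map_mul, map_inv, FreeGroup.lift_apply_of]
      have hta : toPerm n a = Equiv.swap (fmk n 0) (fmk n 1) := by
        rw [toPerm_eq, show pa n a.1 = 0 from by unfold pa; split_ifs <;> first | contradiction | omega,
          show pb n a.1 = 1 from by unfold pb; split_ifs <;> first | contradiction | omega]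
      have htb : toPerm n b = Equiv.swap (fmk n 0) (fmk n 2) := by
        rw [toPerm_eq, show pa n b.1 = 0 from by unfold pa; split_ifs <;> first | contradiction | omega,
          show pb n b.1 = 2 from by unfold pb; split_ifs <;> first | contradiction | omega]
      have htc : toPerm n c = Equiv.swap (fmk n 0) (fmk n 3) := by
        rw [toPerm_eq, show pa n c.1 = 0 from by unfold pa; split_ifs <;> first | contradiction | omega,
          show pb n c.1 = 3 from by unfold pb; split_ifs <;> first | contradiction | omega]
      rw [hta, htb, htc,
        swap_conj_core (fmk_ne (by omega) (by omega) (by omega))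
          (fmk_ne (by omega) (by omega) (by omega))
          (fmk_ne (by omega) (by omega) (by omega) :
            fmk n 3 ≠ fmk n 2),
        swap_commute (fmk_ne (by omega) (by omega) (by omega))
          (fmk_ne (by omega) (by omega) (by omega))
          (fmk_ne (by omega) (by omega) (by omega))
          (fmk_ne (by omega) (by omega) (by omega))]
      group
    · -- [x_{2k+2}, x_{2k-1} x_{2k+1} x_{2k-1}] = 1
      simp only [commR, map_mul, map_inv, FreeGroup.lift_apply_of]
      have hta : toPerm n a = Equiv.swap (fmk n (2 * k - 2)) (fmk n (2 * k + 1)) := by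
        rw [toPerm_eq, show pa n a.1 = 2 * k - 2 from by unfold pa; split_ifs <;> first | contradiction | omega,
          show pb n a.1 = 2 * k + 1 from by unfold pb; split_ifs <;> first | contradiction | omega]
      have htb : toPerm n b = Equiv.swap (fmk n (2 * k - 2)) (fmk n (2 * k - 4)) := by
        rw [toPerm_eq, show pa n b.1 = 2 * k - 4 from by unfold pa; split_ifs <;> first | contradiction | omega,
          show pb n b.1 = 2 * k - 2 from by unfold pb; split_ifs <;> first | contradiction | omega]
        exact Equiv.swap_comm _ _
      have htc : toPerm n c = Equiv.swap (fmk n (2 * k - 2)) (fmk n (2 * k)) := by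
        rw [toPerm_eq, show pa n c.1 = 2 * k - 2 from by unfold pa; split_ifs <;> first | contradiction | omega,
          show pb n c.1 = 2 * k from by unfold pb; split_ifs <;> first | contradiction | omega]
      rw [hta, htb, htc,
        swap_conj_core
          (fmk_ne (by omega) (by omega) (by omega) : fmk n (2 * k - 2) ≠ fmk n (2 * k - 4))
          (fmk_ne (by omega) (by omega) (by omega) : fmk n (2 * k - 2) ≠ fmk n (2 * k))
          (fmk_ne (by omega) (by omega) (by omega) : fmk n (2 * k - 4) ≠ fmk n (2 * k)),
        swap_commute
          (fmk_ne (by omega) (by omega) (by omega) : fmk n (2 * k - 4) ≠ fmk n (2 * k - 2))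
          (fmk_ne (by omega) (by omega) (by omega) : fmk n (2 * k - 4) ≠ fmk n (2 * k + 1))
          (fmk_ne (by omega) (by omega) (by omega) : fmk n (2 * k) ≠ fmk n (2 * k - 2))
          (fmk_ne (by omega) (by omega) (by omega) : fmk n (2 * k) ≠ fmk n (2 * k + 1))]
      group
  refine ⟨hmain, ?_⟩
  rw [← MonoidHom.range_eq_top]
  set S := (PresentedGroup.toGroup hmain).range with hS
  have hgen : ∀ (i : ℕ) (hv : i = 1 ∨ (3 ≤ i ∧ i ≤ 2 * n + 2)),
      Equiv.swap (fmk n (pa n i)) (fmk n (pb n i)) ∈ S := by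
    intro i hv
    exact ⟨PresentedGroup.of (⟨i, hv⟩ : Idx n),
      (PresentedGroup.toGroup.of hmain).trans (toPerm_eq n ⟨i, hv⟩)⟩
  have hswap0 : ∀ m : ℕ, m ≤ 2 * n + 1 → Equiv.swap (fmk n 0) (fmk n m) ∈ S := by
    intro m
    induction m using Nat.strong_induction_on with
    | _ m IH =>
      intro hm
      by_cases h0 : m = 0
      · subst h0; rw [Equiv.swap_self, ← Equiv.Perm.one_def]; exact one_mem S
      by_cases h1 : m = 1
      · subst h1
        have hg := hgen 1 (Or.inl rfl)
        rwa [show pa n 1 = 0 from by unfold pa; split_ifs <;> first | contradiction | omega,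
          show pb n 1 = 1 from by unfold pb; split_ifs <;> first | contradiction | omega] at hg
      by_cases h2 : m = 2
      · subst h2
        have hg := hgen 3 (by omega)
        rwa [show pa n 3 = 0 from by unfold pa; split_ifs <;> first | contradiction | omega,
          show pb n 3 = 2 from by unfold pb; split_ifs <;> first | contradiction | omega] at hg
      by_cases h3 : m = 3
      · subst h3
        have hg := hgen 4 (by omega)
        rwa [show pa n 4 = 0 from by unfold pa; split_ifs <;> first | contradiction | omega,
          show pb n 4 = 3 from by unfold pb; split_ifs <;> first | contradiction | omega] at hg
      by_cases h2n : m = 2 * n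
      · subst h2n
        have hg := hgen (2 * n + 1) (by omega)
        rw [show pa n (2 * n + 1) = 3 from by unfold pa; split_ifs <;> first | contradiction | omega,
          show pb n (2 * n + 1) = 2 * n from by unfold pb; split_ifs <;> first | contradiction | omega] at hg
        exact swap_step (fmk_ne (by omega) (by omega) (by omega))
          (fmk_ne (by omega) (by omega) (by omega)) (IH 3 (by omega) (by omega)) hg
      by_cases h2n1 : m = 2 * n + 1
      · subst h2n1
        have hg := hgen (2 * n + 2) (by omega)
        rw [show pa n (2 * n + 2) = 2 * n - 2 from by unfold pa; split_ifs <;> first | contradiction | omega,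
          show pb n (2 * n + 2) = 2 * n + 1 from by unfold pb; split_ifs <;> first | contradiction | omega] at hg
        exact swap_step (fmk_ne (by omega) (by omega) (by omega))
          (fmk_ne (by omega) (by omega) (by omega))
          (IH (2 * n - 2) (by omega) (by omega)) hg
      by_cases hpar : m % 2 = 0
      · have hg := hgen (m + 1) (by omega)
        rw [show pa n (m + 1) = m - 2 from by unfold pa; split_ifs <;> first | contradiction | omega,
          show pb n (m + 1) = m from by unfold pb; split_ifs <;> first | contradiction | omega] at hg
        exact swap_step (fmk_ne (by omega) (by omega) (by omega))
          (fmk_ne (by omega) (by omega) (by omega))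
          (IH (m - 2) (by omega) (by omega)) hg
      · have hg := hgen (m + 1) (by omega)
        rw [show pa n (m + 1) = m - 3 from by unfold pa; split_ifs <;> first | contradiction | omega,
          show pb n (m + 1) = m from by unfold pb; split_ifs <;> first | contradiction | omega] at hg
        exact swap_step (fmk_ne (by omega) (by omega) (by omega))
          (fmk_ne (by omega) (by omega) (by omega))
          (IH (m - 3) (by omega) (by omega)) hg
  have hfx : ∀ x : Fin (2 * n + 2), x = fmk n x.1 := by
    intro x
    apply Fin.ext
    simp [fmk, Nat.mod_eq_of_lt x.isLt]
  have h0 : ∀ x : Fin (2 * n + 2), Equiv.swap (fmk n 0) x ∈ S := by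
    intro x
    rw [hfx x]
    exact hswap0 x.1 (by have := x.isLt; omega)
  have hallswap : ∀ x y : Fin (2 * n + 2), Equiv.swap x y ∈ S := by
    intro x y
    by_cases hxy : x = y
    · subst hxy; rw [Equiv.swap_self, ← Equiv.Perm.one_def]; exact one_mem S
    by_cases hx0 : x = fmk n 0
    · rw [hx0]; exact h0 y
    by_cases hy0 : y = fmk n 0
    · rw [hy0, Equiv.swap_comm]; exact h0 x
    · exact swap_step hx0 hxy (by rw [Equiv.swap_comm]; exact h0 x) (h0 y)
  rw [eq_top_iff, ← Equiv.Perm.closure_isSwap, Subgroup.closure_le]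
  rintro σ ⟨x, y, -, rfl⟩
  exact hallswap x y
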